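/- arXiv:1804.05668 — 4 statements merged into one kernel-verified Lean document; each statement's English description precedes it below -/
import Mathlib

section
/- For every λ > 0 there exists a constant C > 0 such that for all x, y, t ∈ (0,∞), the Bessel Poisson kernel satisfies 0 ≤ P_t^λ(x,y) ≤ C · t (xy)^λ / ((x−y)² + t²)^{λ+1}. -/
open Real MeasureTheory Set Filter

/-- The Bessel Poisson kernel `P_t^λ(x,y)`. -/
noncomputable def besselPoissonKernel (lam x y t : ℝ) : ℝ :=
  (2 * lam / π) * t * (x * y) ^ lam *
    ∫ θ in (0:ℝ)..π,
      (Real.sin θ) ^ (2 * lam - 1) /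
        ((x - y) ^ 2 + t ^ 2 + 2 * x * y * (1 - Real.cos θ)) ^ (lam + 1)

/-!
Since `1 - cos θ ≥ 0`, the denominator of the integrand is at least `(x - y)² + t²`, so the
integral is at most `(∫₀^π sin^{2λ-1} θ dθ) / ((x - y)² + t²)^{λ+1}`. The remaining integral is
finite because `2λ - 1 > -1`: by Jordan's inequality `sin θ ≥ 2θ/π` on `[0, π/2]`, the power
`sin^p θ` is dominated there by the integrable `1 + (2θ/π)^p`, and `sin (π - θ) = sin θ` handles `[π/2, π]`.
-/

namespace Real

lemma sin_rpow_le_one_add_rpow {p θ : ℝ} (hθ₀ : 0 < θ) (hθ : θ ≤ π / 2) :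
    sin θ ^ p ≤ 1 + (2 / π) ^ p * θ ^ p := by
  have hsin := mul_le_sin hθ₀.le hθ
  rw [← mul_rpow (by positivity) hθ₀.le]
  rcases le_or_gt 0 p with hp | hp
  · have := rpow_le_one (hsin.trans' (by positivity)) (sin_le_one θ) hp
    linarith [rpow_nonneg (by positivity : (0:ℝ) ≤ 2 / π * θ) p]
  · linarith [rpow_le_rpow_of_nonpos (by positivity) hsin hp.le]

lemma intervalIntegrable_sin_rpow_zero_pi_div_two {p : ℝ} (hp : -1 < p) :
    IntervalIntegrable (fun θ ↦ sin θ ^ p) volume 0 (π / 2) := by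
  have hbound : IntervalIntegrable (fun θ ↦ 1 + (2 / π) ^ p * θ ^ p) volume 0 (π / 2) :=
    intervalIntegrable_const.add ((intervalIntegral.intervalIntegrable_rpow' hp).const_mul _)
  refine hbound.mono_fun' (measurable_sin.pow_const p).aestronglyMeasurable ?_
  rw [uIoc_of_le (by positivity)]
  filter_upwards [ae_restrict_mem measurableSet_Ioc] with θ ⟨hθ₀, hθ⟩
  rw [norm_of_nonneg (rpow_nonneg (sin_nonneg_of_nonneg_of_le_pi hθ₀.le (by linarith [pi_pos])) p)]
  exact sin_rpow_le_one_add_rpow hθ₀ hθ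

lemma intervalIntegrable_sin_rpow_zero_pi {p : ℝ} (hp : -1 < p) :
    IntervalIntegrable (fun θ ↦ sin θ ^ p) volume 0 π := by
  have hleft := intervalIntegrable_sin_rpow_zero_pi_div_two hp
  have hright : IntervalIntegrable (fun θ ↦ sin θ ^ p) volume (π / 2) π := by
    simpa [sin_pi_sub, sub_half] using (hleft.comp_sub_left π).symm
  exact hleft.trans hright

end Real

namespace intervalIntegral

lemma integral_div_le_integral_div {f g : ℝ → ℝ} {a b D : ℝ} (hab : a ≤ b)
    (hf : IntervalIntegrable f volume a b) (hf₀ : ∀ θ ∈ Icc a b, 0 ≤ f θ)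
    (hg : ContinuousOn g (Icc a b)) (hD : 0 < D) (hDg : ∀ θ ∈ Icc a b, D ≤ g θ) :
    ∫ θ in a..b, f θ / g θ ≤ (∫ θ in a..b, f θ) / D := by
  have hfg : IntervalIntegrable (fun θ ↦ f θ / g θ) volume a b := by
    have hg' : ContinuousOn (fun θ ↦ (g θ)⁻¹) (uIcc a b) := by
      rw [uIcc_of_le hab]
      exact hg.inv₀ fun θ hθ ↦ (hD.trans_le (hDg θ hθ)).ne'
    simpa only [div_eq_mul_inv] using hf.mul_continuousOn hg'
  rw [← integral_div]
  refine integral_mono_on hab hfg (hf.div_const D) fun θ hθ ↦ ?_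
  exact div_le_div_of_nonneg_left (hf₀ θ hθ) hD (hDg θ hθ)

end intervalIntegral

section BesselPoissonKernel

variable {lam x y t : ℝ}

lemma sub_sq_add_sq_le_add_mul_one_sub_cos (hxy : 0 ≤ x * y) (θ : ℝ) :
    (x - y) ^ 2 + t ^ 2 ≤ (x - y) ^ 2 + t ^ 2 + 2 * x * y * (1 - cos θ) := by
  have : 0 ≤ 2 * (x * y) * (1 - cos θ) := mul_nonneg (by positivity) (by linarith [cos_le_one θ])
  linarith

lemma besselPoissonKernel_nonneg (hlam : 0 ≤ lam) (hxy : 0 ≤ x * y) (ht : 0 ≤ t) :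
    0 ≤ besselPoissonKernel lam x y t := by
  refine mul_nonneg (by positivity) (intervalIntegral.integral_nonneg pi_pos.le fun θ hθ ↦ ?_)
  have hden := (sub_sq_add_sq_le_add_mul_one_sub_cos (t := t) hxy θ).trans' (by positivity)
  exact div_nonneg (rpow_nonneg (sin_nonneg_of_nonneg_of_le_pi hθ.1 hθ.2) _) (rpow_nonneg hden _)

lemma besselPoissonKernel_le (hlam : 0 < lam) (hxy : 0 ≤ x * y) (ht : 0 < t) :
    besselPoissonKernel lam x y t ≤
      2 * lam / π * (∫ θ in (0:ℝ)..π, sin θ ^ (2 * lam - 1)) * t * (x * y) ^ lam /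
        ((x - y) ^ 2 + t ^ 2) ^ (lam + 1) := by
  have hD : 0 < (x - y) ^ 2 + t ^ 2 := by positivity
  have hintegral := intervalIntegral.integral_div_le_integral_div pi_pos.le
    (Real.intervalIntegrable_sin_rpow_zero_pi (p := 2 * lam - 1) (by linarith))
    (fun θ hθ ↦ rpow_nonneg (sin_nonneg_of_nonneg_of_le_pi hθ.1 hθ.2) _)
    (by fun_prop (disch := linarith)) (rpow_pos_of_pos hD (lam + 1))
    (fun θ _ ↦ rpow_le_rpow hD.le (sub_sq_add_sq_le_add_mul_one_sub_cos hxy θ) (by linarith))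
  calc besselPoissonKernel lam x y t
      ≤ 2 * lam / π * t * (x * y) ^ lam *
          ((∫ θ in (0:ℝ)..π, sin θ ^ (2 * lam - 1)) / ((x - y) ^ 2 + t ^ 2) ^ (lam + 1)) :=
        mul_le_mul_of_nonneg_left hintegral (by positivity)
    _ = _ := by ring

end BesselPoissonKernel

theorem bessel_poisson_kernel_upper_bound (lam : ℝ) (hlam : 0 < lam) :
    ∃ C : ℝ, 0 < C ∧ ∀ x y t : ℝ, 0 < x → 0 < y → 0 < t →
      0 ≤ besselPoissonKernel lam x y t ∧
      besselPoissonKernel lam x y t ≤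
        C * t * (x * y) ^ lam / ((x - y) ^ 2 + t ^ 2) ^ (lam + 1) := by
  have hI : 0 < ∫ θ in (0:ℝ)..π, sin θ ^ (2 * lam - 1) :=
    intervalIntegral.intervalIntegral_pos_of_pos_on
      (Real.intervalIntegrable_sin_rpow_zero_pi (by linarith))
      (fun θ hθ ↦ rpow_pos_of_pos (sin_pos_of_pos_of_lt_pi hθ.1 hθ.2) _) pi_pos
  refine ⟨2 * lam / π * ∫ θ in (0:ℝ)..π, sin θ ^ (2 * lam - 1), by positivity,
    fun x y t hx hy ht ↦ ?_⟩
  have hxy : 0 ≤ x * y := by positivity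
  exact ⟨besselPoissonKernel_nonneg hlam.le hxy ht.le, besselPoissonKernel_le hlam hxy ht⟩
end

section
/- For every λ > 0 there exists a constant C > 0 such that for all x, y, t ∈ (0,∞), the Bessel Poisson kernel satisfies P_t^λ(x,y) ≤ C · t / ((x−y)² + t²). -/
open Real MeasureTheory Set Filter

/-!
Put `D = (x - y)² + t²`, `a = 2xy`, and split
`sin^(2λ-1) θ = sin θ (1 - cos θ)^(λ-1) (1 + cos θ)^(λ-1)`.
The factors `1 ∓ cos θ` add up to `2`, so one of them lies in `[1, 2]` and its power is at most
`K = max 1 2^(λ-1)`. Hence the integrand is at most `K` times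
`sin θ (1 - cos θ)^(λ-1) / (D + a (1 - cos θ))^(λ+1)`, the derivative of
`((1 - cos θ) / (D + a (1 - cos θ)))^λ / (λ D)`, plus
`K (D + a)^(-λ-1) sin θ (1 + cos θ)^(λ-1)`, the derivative of
`-K (D + a)^(-λ-1) (1 + cos θ)^λ / λ`.
Both integrals are `O(1 / (D a^λ))`, and `a^λ` cancels the factor `(xy)^λ` of the kernel.
-/

theorem intervalIntegral.integral_mono_of_nonneg_of_le_on_Ioo {f g : ℝ → ℝ} {a b : ℝ}
    (hab : a ≤ b) (hg : IntervalIntegrable g volume a b) (hf : ∀ x ∈ Ioo a b, 0 ≤ f x)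
    (hfg : ∀ x ∈ Ioo a b, f x ≤ g x) : ∫ x in a..b, f x ≤ ∫ x in a..b, g x := by
  rw [intervalIntegral.integral_of_le hab, intervalIntegral.integral_of_le hab,
    integral_Ioc_eq_integral_Ioo, integral_Ioc_eq_integral_Ioo]
  exact integral_mono_of_nonneg (ae_restrict_of_forall_mem measurableSet_Ioo hf)
    (hg.1.mono_set Ioo_subset_Ioc_self) (ae_restrict_of_forall_mem measurableSet_Ioo hfg)

theorem intervalIntegral.intervalIntegrable_and_integral_eq_sub_of_hasDerivAt_of_nonneg
    {f F : ℝ → ℝ} {a b : ℝ} (hab : a ≤ b) (hcont : ContinuousOn F (Icc a b))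
    (hderiv : ∀ x ∈ Ioo a b, HasDerivAt F (f x) x) (hf : ∀ x ∈ Ioo a b, 0 ≤ f x) :
    IntervalIntegrable f volume a b ∧ ∫ x in a..b, f x = F b - F a := by
  have hint : IntervalIntegrable f volume a b :=
    (intervalIntegrable_iff_integrableOn_Ioc_of_le hab).2
      (intervalIntegral.integrableOn_deriv_of_nonneg hcont hderiv hf)
  exact ⟨hint, intervalIntegral.integral_eq_sub_of_hasDerivAt_of_le hab hcont hderiv hint⟩

lemma one_sub_cos_pos_of_mem_Ioo {θ : ℝ} (hθ : θ ∈ Ioo 0 π) : 0 < 1 - cos θ := by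
  linarith [cos_zero ▸ cos_lt_cos_of_nonneg_of_le_pi le_rfl hθ.2.le hθ.1]

lemma one_add_cos_pos_of_mem_Ioo {θ : ℝ} (hθ : θ ∈ Ioo 0 π) : 0 < 1 + cos θ := by
  linarith [cos_pi ▸ cos_lt_cos_of_nonneg_of_le_pi hθ.1.le le_rfl hθ.2]

lemma sin_rpow_two_mul_sub_one {θ : ℝ} (hθ : θ ∈ Ioo 0 π) (lam : ℝ) :
    sin θ ^ (2 * lam - 1) = sin θ * ((1 - cos θ) ^ (lam - 1) * (1 + cos θ) ^ (lam - 1)) := by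
  have hsin := sin_pos_of_pos_of_lt_pi hθ.1 hθ.2
  rw [← mul_rpow (one_sub_cos_pos_of_mem_Ioo hθ).le (one_add_cos_pos_of_mem_Ioo hθ).le,
    show (1 - cos θ) * (1 + cos θ) = sin θ ^ (2 : ℝ) by rw [rpow_two, sin_sq]; ring,
    ← rpow_mul hsin.le, show 2 * lam - 1 = 1 + 2 * (lam - 1) by ring, rpow_add hsin, rpow_one]

lemma rpow_sub_one_le_max_one_two_rpow {b : ℝ} (lam : ℝ) (h1 : 1 ≤ b) (h2 : b ≤ 2) :
    b ^ (lam - 1) ≤ max 1 (2 ^ (lam - 1)) := by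
  rcases le_total lam 1 with h | h
  · exact le_max_of_le_left (rpow_le_one_of_one_le_of_nonpos h1 (by linarith))
  · exact le_max_of_le_right (rpow_le_rpow (by linarith) h2 (by linarith))

lemma rpow_mul_rpow_div_rpow_le {lam D a u v : ℝ} (hlam : 0 ≤ lam + 1) (hD : 0 < D)
    (ha : 0 ≤ a) (hu : 0 < u) (hv : 0 < v) (huv : u + v = 2) :
    u ^ (lam - 1) * v ^ (lam - 1) / (D + a * u) ^ (lam + 1) ≤
      max 1 (2 ^ (lam - 1)) * (u ^ (lam - 1) / (D + a * u) ^ (lam + 1)) +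
        max 1 (2 ^ (lam - 1)) / (D + a) ^ (lam + 1) * v ^ (lam - 1) := by
  set K : ℝ := max 1 (2 ^ (lam - 1))
  rcases le_total 1 u with hu1 | hu1
  · have hu' : u ^ (lam - 1) ≤ K := rpow_sub_one_le_max_one_two_rpow lam hu1 (by linarith)
    calc u ^ (lam - 1) * v ^ (lam - 1) / (D + a * u) ^ (lam + 1)
        ≤ K * v ^ (lam - 1) / (D + a) ^ (lam + 1) := by
          gcongr
          nlinarith
      _ = K / (D + a) ^ (lam + 1) * v ^ (lam - 1) := div_mul_eq_mul_div .. |>.symm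
      _ ≤ _ := le_add_of_nonneg_left (by positivity)
  · have hv' : v ^ (lam - 1) ≤ K :=
      rpow_sub_one_le_max_one_two_rpow lam (by linarith) (by linarith)
    calc u ^ (lam - 1) * v ^ (lam - 1) / (D + a * u) ^ (lam + 1)
        ≤ K * (u ^ (lam - 1) / (D + a * u) ^ (lam + 1)) := by
          rw [mul_div_right_comm, mul_comm K]
          gcongr
      _ ≤ _ := le_add_of_nonneg_right (by positivity)

lemma hasDerivAt_div_add_mul_rpow {lam D a s : ℝ} (hD : 0 < D) (ha : 0 ≤ a) (hs : 0 < s) :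
    HasDerivAt (fun s => (s / (D + a * s)) ^ lam)
      (lam * D * (s ^ (lam - 1) / (D + a * s) ^ (lam + 1))) s := by
  have hP : 0 < D + a * s := by positivity
  have hq : HasDerivAt (fun s => s / (D + a * s)) (D / (D + a * s) ^ 2) s :=
    ((hasDerivAt_id' s).div (((hasDerivAt_id' s).const_mul a).const_add D) hP.ne').congr_deriv
      (by ring)
  refine (hq.rpow_const (p := lam) (Or.inl (by positivity))).congr_deriv ?_
  rw [div_rpow hs.le hP.le, show lam + 1 = (lam - 1) + 2 by ring, rpow_add hP, rpow_two]
  field_simp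

lemma hasDerivAt_one_sub_cos (θ : ℝ) : HasDerivAt (fun θ => 1 - cos θ) (sin θ) θ := by
  simpa using (hasDerivAt_cos θ).const_sub 1

lemma intervalIntegrable_and_integral_sin_mul_one_sub_cos_rpow_div {lam D a : ℝ}
    (hlam : 0 < lam) (hD : 0 < D) (ha : 0 ≤ a) :
    IntervalIntegrable
        (fun θ => sin θ * ((1 - cos θ) ^ (lam - 1) / (D + a * (1 - cos θ)) ^ (lam + 1)))
        volume 0 π ∧
      ∫ θ in (0)..π, sin θ * ((1 - cos θ) ^ (lam - 1) / (D + a * (1 - cos θ)) ^ (lam + 1)) =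
        (2 / (D + a * 2)) ^ lam / (lam * D) := by
  have hP (θ : ℝ) : 0 < D + a * (1 - cos θ) := by nlinarith [cos_le_one θ]
  convert intervalIntegral.intervalIntegrable_and_integral_eq_sub_of_hasDerivAt_of_nonneg
    (F := fun θ => ((1 - cos θ) / (D + a * (1 - cos θ))) ^ lam / (lam * D)) pi_pos.le
    ?_ (fun θ hθ => ?_) (fun θ hθ => ?_) using 2
  · norm_num [zero_rpow hlam.ne']
  · have hs : Continuous fun θ => 1 - cos θ := continuous_const.sub continuous_cos
    exact ((hs.div (continuous_const.add (continuous_const.mul hs)) fun θ => (hP θ).ne')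
      |>.rpow_const (fun _ => Or.inr hlam.le) |>.div_const _).continuousOn
  · refine (((hasDerivAt_div_add_mul_rpow (lam := lam) hD ha
      (one_sub_cos_pos_of_mem_Ioo hθ)).comp θ (hasDerivAt_one_sub_cos θ)).div_const
        (lam * D)).congr_deriv ?_
    field_simp
  · have := one_sub_cos_pos_of_mem_Ioo hθ
    have := sin_pos_of_pos_of_lt_pi hθ.1 hθ.2
    have := hP θ
    positivity

lemma intervalIntegrable_and_integral_sin_mul_one_add_cos_rpow {lam : ℝ} (hlam : 0 < lam) :
    IntervalIntegrable (fun θ => sin θ * (1 + cos θ) ^ (lam - 1)) volume 0 π ∧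
      ∫ θ in (0)..π, sin θ * (1 + cos θ) ^ (lam - 1) = 2 ^ lam / lam := by
  convert intervalIntegral.intervalIntegrable_and_integral_eq_sub_of_hasDerivAt_of_nonneg
    (F := fun θ => -(1 + cos θ) ^ lam / lam) pi_pos.le
    ?_ (fun θ hθ => ?_) (fun θ hθ => ?_) using 2
  · norm_num [zero_rpow hlam.ne']
    ring
  · exact ((continuous_const.add continuous_cos).rpow_const
      fun _ => Or.inr hlam.le).neg.div_const _ |>.continuousOn
  · refine ((((hasDerivAt_cos θ).const_add 1).rpow_const (p := lam)
      (Or.inl (one_add_cos_pos_of_mem_Ioo hθ).ne')).neg.div_const lam).congr_deriv ?_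
    field_simp
  · have := one_add_cos_pos_of_mem_Ioo hθ
    have := sin_pos_of_pos_of_lt_pi hθ.1 hθ.2
    positivity

lemma integral_sin_rpow_div_le {lam D a : ℝ} (hlam : 0 < lam) (hD : 0 < D) (ha : 0 < a) :
    ∫ θ in (0)..π, sin θ ^ (2 * lam - 1) / (D + a * (1 - cos θ)) ^ (lam + 1) ≤
      max 1 (2 ^ (lam - 1)) * (1 + 2 ^ lam) / (lam * D * a ^ lam) := by
  set K : ℝ := max 1 (2 ^ (lam - 1))
  obtain ⟨hint₁, hval₁⟩ :=
    intervalIntegrable_and_integral_sin_mul_one_sub_cos_rpow_div hlam hD ha.le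
  obtain ⟨hint₂, hval₂⟩ := intervalIntegrable_and_integral_sin_mul_one_add_cos_rpow hlam
  have hbound₁ : (2 / (D + a * 2)) ^ lam / (lam * D) ≤ 1 / (lam * D * a ^ lam) := by
    have : 2 / (D + a * 2) ≤ 1 / a := by
      rw [div_le_div_iff₀ (by positivity) ha]
      linarith
    calc (2 / (D + a * 2)) ^ lam / (lam * D) ≤ (1 / a) ^ lam / (lam * D) := by gcongr
      _ = 1 / (lam * D * a ^ lam) := by rw [div_rpow zero_le_one ha.le, one_rpow]; field_simp
  have hbound₂ : 1 / (D + a) ^ (lam + 1) ≤ 1 / (D * a ^ lam) := by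
    rw [rpow_add_one (by positivity), mul_comm D]
    gcongr <;> linarith
  calc ∫ θ in (0)..π, sin θ ^ (2 * lam - 1) / (D + a * (1 - cos θ)) ^ (lam + 1)
      ≤ ∫ θ in (0)..π,
          K * (sin θ * ((1 - cos θ) ^ (lam - 1) / (D + a * (1 - cos θ)) ^ (lam + 1))) +
            K / (D + a) ^ (lam + 1) * (sin θ * (1 + cos θ) ^ (lam - 1)) := by
        refine intervalIntegral.integral_mono_of_nonneg_of_le_on_Ioo pi_pos.le
          ((hint₁.const_mul K).add (hint₂.const_mul _)) (fun θ hθ => ?_) (fun θ hθ => ?_)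
        · have := sin_pos_of_pos_of_lt_pi hθ.1 hθ.2
          have : 0 < D + a * (1 - cos θ) := by nlinarith [one_sub_cos_pos_of_mem_Ioo hθ]
          positivity
        · calc sin θ ^ (2 * lam - 1) / (D + a * (1 - cos θ)) ^ (lam + 1)
              = sin θ * ((1 - cos θ) ^ (lam - 1) * (1 + cos θ) ^ (lam - 1) /
                  (D + a * (1 - cos θ)) ^ (lam + 1)) := by
                rw [sin_rpow_two_mul_sub_one hθ, mul_div_assoc]
            _ ≤ sin θ * (K * ((1 - cos θ) ^ (lam - 1) / (D + a * (1 - cos θ)) ^ (lam + 1)) +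
                  K / (D + a) ^ (lam + 1) * (1 + cos θ) ^ (lam - 1)) := by
                gcongr
                · exact (sin_pos_of_pos_of_lt_pi hθ.1 hθ.2).le
                · exact rpow_mul_rpow_div_rpow_le (by linarith) hD ha.le
                    (one_sub_cos_pos_of_mem_Ioo hθ) (one_add_cos_pos_of_mem_Ioo hθ) (by ring)
            _ = _ := by ring
    _ = K * ((2 / (D + a * 2)) ^ lam / (lam * D)) +
          K * (2 ^ lam / lam) * (1 / (D + a) ^ (lam + 1)) := by
        rw [intervalIntegral.integral_add (hint₁.const_mul K) (hint₂.const_mul _),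
          intervalIntegral.integral_const_mul, intervalIntegral.integral_const_mul, hval₁,
          hval₂]
        ring
    _ ≤ K * (1 / (lam * D * a ^ lam)) + K * (2 ^ lam / lam) * (1 / (D * a ^ lam)) := by
        gcongr
    _ = K * (1 + 2 ^ lam) / (lam * D * a ^ lam) := by
        field_simp

theorem bessel_poisson_kernel_classical_bound (lam : ℝ) (hlam : 0 < lam) :
    ∃ C : ℝ, 0 < C ∧ ∀ x y t : ℝ, 0 < x → 0 < y → 0 < t →
      besselPoissonKernel lam x y t ≤ C * t / ((x - y) ^ 2 + t ^ 2) := by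
  set K : ℝ := max 1 (2 ^ (lam - 1))
  refine ⟨2 * K * (1 + 2 ^ lam) / (π * 2 ^ lam), by positivity, fun x y t hx hy ht => ?_⟩
  have hD : 0 < (x - y) ^ 2 + t ^ 2 := by positivity
  calc besselPoissonKernel lam x y t
      ≤ 2 * lam / π * t * (x * y) ^ lam *
          (K * (1 + 2 ^ lam) / (lam * ((x - y) ^ 2 + t ^ 2) * (2 * x * y) ^ lam)) :=
        mul_le_mul_of_nonneg_left (integral_sin_rpow_div_le hlam hD (by positivity))
          (by positivity)
    _ = 2 * K * (1 + 2 ^ lam) / (π * 2 ^ lam) * t / ((x - y) ^ 2 + t ^ 2) := by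
        rw [mul_assoc 2 x y, mul_rpow zero_le_two (by positivity)]
        have : 0 < (x * y) ^ lam := by positivity
        field_simp
end

section
/- For every λ > 0 there exists C > 0 such that for all x, y, t ∈ (0,∞), |∂_t P_t^λ(x,y)| ≤ (C/t) · P_t^λ(x,y). -/
open Real MeasureTheory Set Filter

/-!
Write `D(θ) = (x - y)² + 2xy(1 - cos θ) ≥ 0` and `w(θ) = sin θ ^ (2λ - 1)`, which is
integrable on `[0, π]` because `2λ - 1 > -1`. Then `P_t = c · t · I(t)` with `c ≥ 0` and
`I(t) = ∫ w (D + t²)^(-(λ+1))`. Differentiating under the integral sign,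
`t · I'(t) = -2(λ+1) ∫ w (D + t²)^(-(λ+1)) · t² / (D + t²)`, and `t² / (D + t²) ≤ 1`
gives `t |I'(t)| ≤ 2(λ+1) I(t)`. Hence `|∂_t (t I(t))| ≤ (2λ + 3) I(t)`.
-/

open intervalIntegral
open scoped Interval

lemma sin_rpow_le_add_one {p θ : ℝ} (hθ : θ ∈ Ioc 0 (π / 2)) :
    sin θ ^ p ≤ (2 / π) ^ p * θ ^ p + 1 := by
  obtain ⟨hθ0, hθle⟩ := hθ
  have hθπ : 2 / π * θ ≤ sin θ := mul_le_sin hθ0.le hθle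
  have hsin : 0 ≤ sin θ := le_trans (by positivity) hθπ
  rw [← mul_rpow (by positivity) hθ0.le]
  rcases le_or_gt 0 p with hp | hp
  · have hlow : 0 ≤ (2 / π * θ) ^ p := rpow_nonneg (by positivity) p
    linarith [rpow_le_one hsin (sin_le_one θ) hp]
  · linarith [rpow_le_rpow_of_nonpos (by positivity) hθπ hp.le]

lemma intervalIntegrable_sin_rpow {p : ℝ} (hp : -1 < p) :
    IntervalIntegrable (fun θ => sin θ ^ p) volume 0 π := by
  have hhalf : IntervalIntegrable (fun θ => sin θ ^ p) volume 0 (π / 2) := by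
    refine ((intervalIntegrable_rpow' hp).const_mul ((2 / π) ^ p)).add
      (intervalIntegrable_const (c := 1))
      |>.mono_fun' (measurable_sin.pow_const p).aestronglyMeasurable ?_
    rw [uIoc_of_le (by positivity)]
    refine (ae_restrict_iff' measurableSet_Ioc).mpr (ae_of_all _ fun θ hθ => ?_)
    beta_reduce
    rw [norm_of_nonneg (rpow_nonneg (sin_nonneg_of_nonneg_of_le_pi hθ.1.le
      (hθ.2.trans (by linarith [pi_pos]))) p)]
    exact sin_rpow_le_add_one hθ
  have hreflect := hhalf.comp_sub_left π
  simp only [sin_pi_sub, sub_zero, show π - π / 2 = π / 2 by ring] at hreflect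
  exact hhalf.trans hreflect.symm

section RpowAddSq

variable {w K : ℝ → ℝ} {a b p s t : ℝ}

lemma intervalIntegrable_mul_rpow_add_sq (hw : IntervalIntegrable w volume a b)
    (hK : Measurable K) (hK0 : ∀ θ ∈ Ι a b, 0 ≤ K θ) (hp : 0 ≤ p) (hs : s ≠ 0) :
    IntervalIntegrable (fun θ => w θ * (K θ + s ^ 2) ^ (-p)) volume a b := by
  refine (hw.norm.mul_const ((s ^ 2) ^ (-p))).mono_fun'
    (hw.aestronglyMeasurable_restrict_uIoc.mul
      ((hK.add_const _).pow_const _).aestronglyMeasurable) ?_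
  refine (ae_restrict_iff' measurableSet_uIoc).mpr (ae_of_all _ fun θ hθ => ?_)
  have hKs : 0 ≤ K θ + s ^ 2 := by linarith [hK0 θ hθ, sq_nonneg s]
  beta_reduce
  rw [norm_mul, norm_of_nonneg (rpow_nonneg hKs _)]
  exact mul_le_mul_of_nonneg_left (rpow_le_rpow_of_nonpos (by positivity)
    (by linarith [hK0 θ hθ]) (by linarith)) (norm_nonneg _)

lemma hasDerivAt_integral_mul_rpow_add_sq (hw : IntervalIntegrable w volume a b)
    (hK : Measurable K) (hK0 : ∀ θ ∈ Ι a b, 0 ≤ K θ) (hp : 0 ≤ p) (ht : 0 < t) :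
    HasDerivAt (fun s => ∫ θ in a..b, w θ * (K θ + s ^ 2) ^ (-p))
      (∫ θ in a..b, w θ * (2 * t * -p * (K θ + t ^ 2) ^ (-p - 1))) t := by
  have hball : ∀ s ∈ Metric.ball t (t / 2), t / 2 < s ∧ s < 2 * t := fun s hs => by
    rw [Metric.mem_ball, Real.dist_eq, abs_sub_lt_iff] at hs
    constructor <;> linarith
  refine (intervalIntegral.hasDerivAt_integral_of_dominated_loc_of_deriv_le
    (F := fun s θ => w θ * (K θ + s ^ 2) ^ (-p))
    (F' := fun s θ => w θ * (2 * s * -p * (K θ + s ^ 2) ^ (-p - 1)))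
    (Metric.ball_mem_nhds t (half_pos ht))
    (Eventually.of_forall fun s =>
      hw.aestronglyMeasurable_restrict_uIoc.mul ((hK.add_const _).pow_const _).aestronglyMeasurable)
    (intervalIntegrable_mul_rpow_add_sq hw hK hK0 hp ht.ne')
    (hw.aestronglyMeasurable_restrict_uIoc.mul
      (measurable_const.mul ((hK.add_const _).pow_const _)).aestronglyMeasurable)
    (bound := fun θ => ‖w θ‖ * (4 * t * p * (t ^ 2 / 4) ^ (-p - 1))) ?_
    (hw.norm.mul_const _) ?_).2
  · refine ae_of_all _ fun θ hθ s hs => ?_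
    obtain ⟨hs1, hs2⟩ := hball s hs
    have hKs : 0 < K θ + s ^ 2 := by nlinarith [hK0 θ hθ]
    rw [norm_mul, norm_mul, norm_mul, norm_neg, norm_of_nonneg (by linarith : 0 ≤ 2 * s),
      norm_of_nonneg hp, norm_of_nonneg (rpow_nonneg hKs.le _)]
    refine mul_le_mul_of_nonneg_left ?_ (norm_nonneg _)
    have hsp : 2 * s * p ≤ 4 * t * p := mul_le_mul_of_nonneg_right (by linarith) hp
    have hrpow : (K θ + s ^ 2) ^ (-p - 1) ≤ (t ^ 2 / 4) ^ (-p - 1) :=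
      rpow_le_rpow_of_nonpos (by positivity) (by nlinarith [hK0 θ hθ]) (by linarith)
    exact mul_le_mul hsp hrpow (rpow_nonneg hKs.le _) (by positivity)
  · refine ae_of_all _ fun θ hθ s hs => ?_
    have hKs : K θ + s ^ 2 ≠ 0 := by nlinarith [hK0 θ hθ, (hball s hs).1]
    have hbase : HasDerivAt (fun s => K θ + s ^ 2) (2 * s) s := by
      simpa using (hasDerivAt_pow 2 s).const_add (K θ)
    exact (hbase.rpow_const (Or.inl hKs)).const_mul (w θ)

lemma abs_integral_mul_deriv_rpow_add_sq_le (hab : a ≤ b) (hw : IntervalIntegrable w volume a b)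
    (hw0 : ∀ θ ∈ Ι a b, 0 ≤ w θ) (hK : Measurable K) (hK0 : ∀ θ ∈ Ι a b, 0 ≤ K θ)
    (hp : 0 ≤ p) (ht : 0 < t) :
    |∫ θ in a..b, w θ * (2 * t * -p * (K θ + t ^ 2) ^ (-p - 1))| ≤
      2 * p / t * ∫ θ in a..b, w θ * (K θ + t ^ 2) ^ (-p) := by
  rw [← intervalIntegral.integral_const_mul, ← Real.norm_eq_abs]
  refine norm_integral_le_of_norm_le hab (ae_of_all _ fun θ hθ => ?_)
    ((intervalIntegrable_mul_rpow_add_sq hw hK hK0 hp ht.ne').const_mul _)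
  rw [← uIoc_of_le hab] at hθ
  have hD : t ^ 2 ≤ K θ + t ^ 2 := le_add_of_nonneg_left (hK0 θ hθ)
  have hD0 : 0 < K θ + t ^ 2 := lt_of_lt_of_le (by positivity) hD
  have hrewrite : w θ * (2 * t * -p * (K θ + t ^ 2) ^ (-p - 1)) =
      -(2 * p / t * (w θ * (K θ + t ^ 2) ^ (-p)) * (t ^ 2 / (K θ + t ^ 2))) := by
    rw [rpow_sub_one hD0.ne']
    field_simp
  have hmain : 0 ≤ 2 * p / t * (w θ * (K θ + t ^ 2) ^ (-p)) :=
    mul_nonneg (by positivity) (mul_nonneg (hw0 θ hθ) (rpow_nonneg hD0.le _))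
  rw [hrewrite, norm_neg, norm_mul, norm_of_nonneg hmain, norm_of_nonneg (by positivity)]
  exact mul_le_of_le_one_right hmain ((div_le_one hD0).mpr hD)

lemma abs_deriv_mul_integral_rpow_add_sq_le (hab : a ≤ b) (hw : IntervalIntegrable w volume a b)
    (hw0 : ∀ θ ∈ Ι a b, 0 ≤ w θ) (hK : Measurable K) (hK0 : ∀ θ ∈ Ι a b, 0 ≤ K θ)
    (hp : 0 ≤ p) (ht : 0 < t) :
    |deriv (fun s => s * ∫ θ in a..b, w θ * (K θ + s ^ 2) ^ (-p)) t| ≤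
      (2 * p + 1) / t * (t * ∫ θ in a..b, w θ * (K θ + t ^ 2) ^ (-p)) := by
  have hI0 : 0 ≤ ∫ θ in a..b, w θ * (K θ + t ^ 2) ^ (-p) := by
    rw [integral_of_le hab]
    refine setIntegral_nonneg measurableSet_Ioc fun θ hθ => ?_
    rw [← uIoc_of_le hab] at hθ
    exact mul_nonneg (hw0 θ hθ) (rpow_nonneg (by linarith [hK0 θ hθ, sq_nonneg t]) _)
  have hderiv : HasDerivAt (fun s => s * ∫ θ in a..b, w θ * (K θ + s ^ 2) ^ (-p))
      (1 * (∫ θ in a..b, w θ * (K θ + t ^ 2) ^ (-p)) +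
        t * ∫ θ in a..b, w θ * (2 * t * -p * (K θ + t ^ 2) ^ (-p - 1))) t :=
    (hasDerivAt_id' t).mul (hasDerivAt_integral_mul_rpow_add_sq hw hK hK0 hp ht)
  rw [hderiv.deriv]
  calc _ ≤ |∫ θ in a..b, w θ * (K θ + t ^ 2) ^ (-p)| +
          t * |∫ θ in a..b, w θ * (2 * t * -p * (K θ + t ^ 2) ^ (-p - 1))| := by
        rw [one_mul]
        exact (abs_add_le _ _).trans_eq (by rw [abs_mul, abs_of_pos ht])
    _ ≤ (∫ θ in a..b, w θ * (K θ + t ^ 2) ^ (-p)) +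
          t * (2 * p / t * ∫ θ in a..b, w θ * (K θ + t ^ 2) ^ (-p)) := by
        rw [abs_of_nonneg hI0]
        gcongr
        exact abs_integral_mul_deriv_rpow_add_sq_le hab hw hw0 hK hK0 hp ht
    _ = _ := by field_simp; ring

end RpowAddSq

lemma besselPoissonKernel_eq_mul_integral {lam x y : ℝ} (hxy : 0 ≤ x * y) (s : ℝ) :
    besselPoissonKernel lam x y s = 2 * lam / π * (x * y) ^ lam *
      (s * ∫ θ in (0 : ℝ)..π, sin θ ^ (2 * lam - 1) *
        ((x - y) ^ 2 + 2 * x * y * (1 - cos θ) + s ^ 2) ^ (-(lam + 1))) := by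
  have hintegrand : ∀ θ, sin θ ^ (2 * lam - 1) /
      ((x - y) ^ 2 + s ^ 2 + 2 * x * y * (1 - cos θ)) ^ (lam + 1) =
        sin θ ^ (2 * lam - 1) *
          ((x - y) ^ 2 + 2 * x * y * (1 - cos θ) + s ^ 2) ^ (-(lam + 1)) := fun θ => by
    have hbase : 0 ≤ (x - y) ^ 2 + 2 * x * y * (1 - cos θ) + s ^ 2 := by
      nlinarith [cos_le_one θ, sq_nonneg (x - y), sq_nonneg s]
    rw [rpow_neg hbase, div_eq_mul_inv, add_right_comm]
  simp only [besselPoissonKernel, hintegrand]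
  ring

theorem bessel_poisson_kernel_time_deriv_bound (lam : ℝ) (hlam : 0 < lam) :
    ∃ C : ℝ, 0 < C ∧ ∀ x y t : ℝ, 0 < x → 0 < y → 0 < t →
      |deriv (fun s : ℝ => besselPoissonKernel lam x y s) t| ≤
        (C / t) * besselPoissonKernel lam x y t := by
  refine ⟨2 * (lam + 1) + 1, by linarith, fun x y t hx hy ht => ?_⟩
  have hxy : 0 ≤ x * y := (mul_pos hx hy).le
  have hw0 : ∀ θ ∈ Ι 0 π, 0 ≤ sin θ ^ (2 * lam - 1) := fun θ hθ => by
    rw [uIoc_of_le pi_pos.le] at hθ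
    exact rpow_nonneg (sin_nonneg_of_nonneg_of_le_pi hθ.1.le hθ.2) _
  have hK0 : ∀ θ ∈ Ι 0 π, 0 ≤ (x - y) ^ 2 + 2 * x * y * (1 - cos θ) := fun θ _ => by
    nlinarith [cos_le_one θ, sq_nonneg (x - y)]
  simp only [besselPoissonKernel_eq_mul_integral hxy]
  rw [deriv_const_mul_field', abs_mul, abs_of_nonneg (by positivity), mul_left_comm]
  exact mul_le_mul_of_nonneg_left (abs_deriv_mul_integral_rpow_add_sq_le pi_pos.le
    (intervalIntegrable_sin_rpow (by linarith)) hw0 (by fun_prop) hK0 (by linarith) ht)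
    (by positivity)
end

section
/- For all x, y, t ∈ (0,∞) and θ ∈ [0,π], (|x−y| + min{x,y}(1−cos θ)) / ((x−y)² + t² + 2xy(1−cos θ)) ≤ (C/t)(1 + min{x,y}/√(xy)) ≤ 2C/t, where C is an absolute constant. -/
/-!
Write `u = 1 - cos θ ∈ [0, 2]` and split the quotient into two fractions. Dropping terms of the
denominator, `|x - y| / ((x - y)² + t²) ≤ 1 / (2t)` and `u / (t² + 2xyu) ≤ 1 / (2t√(xy))`, both by
AM-GM; for the second, `t² + 2xyu ≥ t² + xyu² ≥ 2t√(xy)u` since `u ≤ 2`. This gives the bound with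
`C = 1/2`, and `min x y ≤ √(xy)` gives the second inequality.
-/

open Real

lemma abs_div_sq_add_sq_le (a : ℝ) {t : ℝ} (ht : 0 < t) :
    |a| / (a ^ 2 + t ^ 2) ≤ 1 / (2 * t) := by
  rw [div_le_div_iff₀ (by positivity) (by positivity)]
  nlinarith [sq_nonneg (|a| - t), sq_abs a]

lemma div_sq_add_two_mul_mul_le {p t u : ℝ} (hp : 0 < p) (ht : 0 < t) (hu₀ : 0 ≤ u)
    (hu₂ : u ≤ 2) : u / (t ^ 2 + 2 * p * u) ≤ 1 / (2 * t * √p) := by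
  have hsu_sq : (√p * u) ^ 2 = p * u ^ 2 := by rw [mul_pow, sq_sqrt hp.le]
  rw [div_le_div_iff₀ (by positivity) (by positivity)]
  nlinarith [sq_nonneg (t - √p * u), mul_nonneg (mul_nonneg hp.le hu₀) (sub_nonneg.2 hu₂)]

lemma min_le_sqrt_mul (x y : ℝ) : min x y ≤ √(x * y) := by
  rcases le_total (min x y) 0 with hm | hm
  · exact hm.trans (sqrt_nonneg _)
  have hx : 0 ≤ x := hm.trans (min_le_left x y)
  rw [le_sqrt hm (mul_nonneg hx (hm.trans (min_le_right x y))), sq]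
  exact mul_le_mul (min_le_left x y) (min_le_right x y) hm hx

lemma abs_sub_add_min_mul_div_le {x y t u : ℝ} (hx : 0 < x) (hy : 0 < y) (ht : 0 < t)
    (hu₀ : 0 ≤ u) (hu₂ : u ≤ 2) :
    (|x - y| + min x y * u) / ((x - y) ^ 2 + t ^ 2 + 2 * x * y * u) ≤
      (1 / 2 / t) * (1 + min x y / √(x * y)) := by
  have hxy : 0 < x * y := mul_pos hx hy
  have hm : 0 < min x y := lt_min hx hy
  have hsub : |x - y| / ((x - y) ^ 2 + t ^ 2 + 2 * x * y * u) ≤ 1 / (2 * t) :=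
    (div_le_div_of_nonneg_left (abs_nonneg _) (by positivity) (by nlinarith)).trans
      (abs_div_sq_add_sq_le (x - y) ht)
  have hmin : min x y * u / ((x - y) ^ 2 + t ^ 2 + 2 * x * y * u) ≤
      min x y * (1 / (2 * t * √(x * y))) := by
    rw [mul_div_assoc]
    refine mul_le_mul_of_nonneg_left ?_ hm.le
    refine (div_le_div_of_nonneg_left hu₀ (by positivity) ?_).trans
      (div_sq_add_two_mul_mul_le hxy ht hu₀ hu₂)
    nlinarith [sq_nonneg (x - y)]
  calc (|x - y| + min x y * u) / ((x - y) ^ 2 + t ^ 2 + 2 * x * y * u)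
      ≤ 1 / (2 * t) + min x y * (1 / (2 * t * √(x * y))) := by
        rw [add_div]; exact add_le_add hsub hmin
    _ = (1 / 2 / t) * (1 + min x y / √(x * y)) := by
        field_simp

theorem elementary_kernel_quotient_bound :
    ∃ C : ℝ, 0 < C ∧ ∀ x y t θ : ℝ, 0 < x → 0 < y → 0 < t →
      θ ∈ Set.Icc 0 π →
      (|x - y| + min x y * (1 - Real.cos θ)) /
          ((x - y) ^ 2 + t ^ 2 + 2 * x * y * (1 - Real.cos θ)) ≤
        (C / t) * (1 + min x y / Real.sqrt (x * y)) ∧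
      (C / t) * (1 + min x y / Real.sqrt (x * y)) ≤ 2 * C / t := by
  refine ⟨1 / 2, by norm_num, fun x y t θ hx hy ht _ => ⟨?_, ?_⟩⟩
  · exact abs_sub_add_min_mul_div_le hx hy ht (by linarith [cos_le_one θ])
      (by linarith [neg_one_le_cos θ])
  · have hratio : min x y / √(x * y) ≤ 1 :=
      div_le_one_of_le₀ (min_le_sqrt_mul x y) (sqrt_nonneg _)
    calc (1 / 2 / t) * (1 + min x y / √(x * y)) ≤ (1 / 2 / t) * 2 := by
          gcongr; linarith
      _ = 2 * (1 / 2) / t := by ring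
end
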